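/- For every history-dependent randomized policy π, every t ∈ ℕ, and every history h_t = (s_0, z_0, a_0, …, a_{t−1}, s_t, z_t), the probability under P^π of the cylinder event {s̃_0 = s_0, z̃_0 = z_0, ã_0 = a_0, …, ã_{t−1} = a_{t−1}, s̃_t = s_t, z̃_t = z_t} equals μ(s_0) · (∏_{k=0}^{min(t_z,t)−1} 1[a_k = ā_k] · P(s_k, a_k)(s_{k+1})) · (∏_{l=t_z}^{t−1} π_{τ_l}(h_{τ_l})(a_l) · P(s_l, a_l)(s_{l+1})) · (∏_{m=0}^{t} ζ(z_m)), where h_{τ_l} denotes the length-τ_l prefix of h_t, empty products equal 1, and for each k ≤ t−1 the condition k < t_z is equivalent to k < min{t' + z_{t'} : 0 ≤ t' ≤ k} and hence is determined by z_0,…,z_k. -/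
import Mathlib


open scoped ENNReal

/-! ## Stochastic execution-delay MDP (SED-MDP) with random delays

`S` and `A` are the finite state and action spaces, `P : S → A → PMF S` the
transition kernel, `μ : PMF S` the initial distribution, `M ≥ 1` the delay bound,
`ζ` the delay distribution (supported on `{0,…,M}`), and `abar` the default action
queue (only indices `< M` are ever used).  A history of length `t` is
`(s 0, z 0, a 0, …, a (t-1), s t, z t)`. -/

/-- Effective decision time `τ_t(z)`: the largest `t' ≤ t` with `t' + z t' ≤ t`. -/
def tau (z : ℕ → ℕ) (t : ℕ) : ℕ := Nat.findGreatest (fun t' => t' + z t' ≤ t) t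

/-- Switch time `t_z = min {z 0, 1 + z 1, …, (M-1) + z (M-1)}`. -/
noncomputable def switchTime (M : ℕ) (z : ℕ → ℕ) : ℕ := sInf {x | ∃ t' < M, t' + z t' = x}

/-- A history-dependent randomized policy: at time `t` it maps the history
`(s 0, z 0, a 0, …, a (t-1), s t, z t)` to a distribution over actions.
It is encoded on whole sequences, together with the causality property `IsCausal`. -/
def IsCausal {S A : Type*}
    (π : ℕ → (ℕ → S) → (ℕ → ℕ) → (ℕ → A) → PMF A) : Prop :=
  ∀ (t : ℕ) (s s' : ℕ → S) (z z' : ℕ → ℕ) (a a' : ℕ → A),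
    (∀ i ≤ t, s i = s' i) → (∀ i ≤ t, z i = z' i) → (∀ j < t, a j = a' j) →
    π t s z a = π t s' z' a'

/-- The probability that the action executed at time `t` is `a t`, given the history:
if `t < min {z 0, 1 + z 1, …, t + z t}` the default action `abar t` is executed
deterministically; otherwise the action is drawn from `π (τ_t) (h (τ_t))`. -/
noncomputable def actProb {S A : Type*} [DecidableEq A] (abar : ℕ → A)
    (π : ℕ → (ℕ → S) → (ℕ → ℕ) → (ℕ → A) → PMF A)
    (t : ℕ) (s : ℕ → S) (z : ℕ → ℕ) (a : ℕ → A) : ℝ≥0∞ :=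
  if t < sInf {x | ∃ t' ≤ t, t' + z t' = x} then (if a t = abar t then 1 else 0)
  else π (tau z t) s z a (a t)

/-- `P^π`-probability of the cylinder
`{s̃ 0 = s 0, z̃ 0 = z 0, ã 0 = a 0, …, ã (t-1) = a (t-1), s̃ t = s t, z̃ t = z t}`,
defined by the Ionescu–Tulcea conditional specification: `s̃ 0 ∼ μ`; each `z̃ t ∼ ζ`
independently of all earlier variables; given the history, the action executed at
time `t` is distributed according to `actProb`; given the history and `ã t = a t`,
`s̃ (t+1) ∼ P (s t) (a t)`. -/
noncomputable def histProb {S A : Type*} [DecidableEq A] (P : S → A → PMF S)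
    (μ : PMF S) (ζ : PMF ℕ) (abar : ℕ → A)
    (π : ℕ → (ℕ → S) → (ℕ → ℕ) → (ℕ → A) → PMF A) :
    ℕ → (ℕ → S) → (ℕ → ℕ) → (ℕ → A) → ℝ≥0∞
  | 0, s, z, _ => μ (s 0) * ζ (z 0)
  | t + 1, s, z, a =>
      histProb P μ ζ abar π t s z a * actProb abar π t s z a
        * P (s t) (a t) (s (t + 1)) * ζ (z (t + 1))

/-- Extension of a finite vector by a default value. -/
def ext {X : Type*} [Inhabited X] {n : ℕ} (v : Fin n → X) : ℕ → X :=
  fun i => if h : i < n then v ⟨i, h⟩ else default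

/-- For every history-dependent randomized policy `π`, every `t`,
and every history `(s 0, z 0, a 0, …, a (t-1), s t, z t)`, the `P^π`-probability of
the corresponding cylinder event equals
`μ (s 0) * (∏_{k < min t_z t} 1[a k = abar k] * P (s k) (a k) (s (k+1)))
  * (∏_{t_z ≤ l < t} π (τ_l) (h (τ_l)) (a l) * P (s l) (a l) (s (l+1)))
  * (∏_{m ≤ t} ζ (z m))`,
and for each `k ≤ t - 1` the condition `k < t_z` is equivalent to
`k < min {t' + z t' : t' ≤ k}`, hence is determined by `z 0, …, z k`. -/
theorem statement4 {S A : Type*} [DecidableEq A]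
    (P : S → A → PMF S) (μ : PMF S) (M : ℕ) (hM : 1 ≤ M)
    (ζ : PMF ℕ) (hζ : ∀ k, M < k → ζ k = 0) (abar : ℕ → A)
    (π : ℕ → (ℕ → S) → (ℕ → ℕ) → (ℕ → A) → PMF A) (hπ : IsCausal π)
    (t : ℕ) (s : ℕ → S) (z : ℕ → ℕ) (hz : ∀ i, z i ≤ M) (a : ℕ → A) :
    histProb P μ ζ abar π t s z a
      = μ (s 0)
        * (∏ k ∈ Finset.range (min (switchTime M z) t),
            (if a k = abar k then (1 : ℝ≥0∞) else 0) * P (s k) (a k) (s (k + 1)))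
        * (∏ l ∈ Finset.Ico (switchTime M z) t,
            π (tau z l) s z a (a l) * P (s l) (a l) (s (l + 1)))
        * (∏ m ∈ Finset.range (t + 1), ζ (z m)) ∧
    ∀ k < t, (k < switchTime M z ↔ k < sInf {x | ∃ t' ≤ k, t' + z t' = x}) := by
  have key : ∀ k : ℕ, (k < switchTime M z ↔ k < sInf {x | ∃ t' ≤ k, t' + z t' = x}) := by
    intro k
    have hg : ({x | ∃ t' < M, t' + z t' = x}).Nonempty := ⟨0 + z 0, 0, hM, rfl⟩
    have hl : ({x | ∃ t' ≤ k, t' + z t' = x}).Nonempty := ⟨0 + z 0, 0, Nat.zero_le k, rfl⟩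
    constructor
    · intro h
      have hmem := Nat.sInf_mem hl
      obtain ⟨t', ht', heq⟩ := hmem
      rcases lt_or_ge t' M with hlt | hge
      · calc k < switchTime M z := h
          _ ≤ t' + z t' := Nat.sInf_le ⟨t', hlt, rfl⟩
          _ = _ := heq
      · have h1 : switchTime M z ≤ 0 + z 0 := Nat.sInf_le ⟨0, hM, rfl⟩
        have : k < M := lt_of_lt_of_le h (h1.trans (by simpa using hz 0))
        omega
    · intro h
      have hmem := Nat.sInf_mem hg
      obtain ⟨t', ht', heq⟩ := hmem
      rcases le_or_gt t' k with hle | hgt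
      · calc k < sInf {x | ∃ t' ≤ k, t' + z t' = x} := h
          _ ≤ t' + z t' := Nat.sInf_le ⟨t', hle, rfl⟩
          _ = _ := heq
      · unfold switchTime
        omega
  refine ⟨?_, fun k _ => key k⟩
  induction t with
  | zero => simp [histProb]
  | succ t ih =>
    have hact : actProb abar π t s z a =
        if t < switchTime M z then (if a t = abar t then (1 : ℝ≥0∞) else 0)
        else π (tau z t) s z a (a t) := by
      unfold actProb
      rcases lt_or_ge t (switchTime M z) with h | h
      · rw [if_pos ((key t).mp h), if_pos h]
      · rw [if_neg (fun hc => absurd ((key t).mpr hc) (not_lt.mpr h)),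
          if_neg (not_lt.mpr h)]
    show histProb P μ ζ abar π t s z a * actProb abar π t s z a
        * P (s t) (a t) (s (t + 1)) * ζ (z (t + 1)) = _
    rw [ih, hact]
    rcases lt_or_ge t (switchTime M z) with h | h
    · rw [if_pos h]
      have h1 : min (switchTime M z) t = t := min_eq_right h.le
      have h2 : min (switchTime M z) (t + 1) = t + 1 := min_eq_right h
      have h3 : Finset.Ico (switchTime M z) t = ∅ := Finset.Ico_eq_empty (not_lt.mpr h.le)
      have h4 : Finset.Ico (switchTime M z) (t + 1) = ∅ := Finset.Ico_eq_empty (not_lt.mpr h)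
      rw [h1, h2, h3, h4, Finset.prod_range_succ (fun k =>
        (if a k = abar k then (1 : ℝ≥0∞) else 0) * P (s k) (a k) (s (k + 1))),
        Finset.prod_range_succ (fun m => ζ (z m)) (t + 1),
        Finset.prod_range_succ (fun m => ζ (z m)) t]
      ring
    · rw [if_neg (not_lt.mpr h)]
      have h1 : min (switchTime M z) t = switchTime M z := min_eq_left h
      have h2 : min (switchTime M z) (t + 1) = switchTime M z := min_eq_left (h.trans t.le_succ)
      rw [h1, h2, Finset.prod_Ico_succ_top h,
        Finset.prod_range_succ (fun m => ζ (z m)) (t + 1),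
        Finset.prod_range_succ (fun m => ζ (z m)) t]
      ring
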